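/- arXiv:1812.09451 — 2 statements merged into one kernel-verified Lean document; each statement's English description precedes it below -/
import Mathlib

section
/- Let Ω ⊂ ℝⁿ be a bounded open set with smooth boundary, ℓ ∈ [2,∞), and let u ∈ C_c^∞(Ω) (extended by 0 outside Ω) be real-valued. Then there exist constants γ > 0 and C > 0, depending only on n, Ω and ℓ, such that ‖u‖_{L^ℓ(Ω)}^{ℓ-1+γ} ≤ C ∫_Ω |u(x)|^{ℓ-2} u(x) (-Δ u)(x) dx. -/
open Real MeasureTheory
open scoped ENNReal

lemma contAbsRpow {c : ℝ} (hc : 0 ≤ c) : Continuous fun t : ℝ => |t| ^ c :=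
  continuous_iff_continuousAt.2 fun t =>
    (Real.continuousAt_rpow_const _ _ (Or.inr hc)).comp continuous_abs.continuousAt

lemma rpow_sq_eq {x : ℝ} (hx : 0 ≤ x) (c : ℝ) : (x ^ c) ^ 2 = x ^ (c * 2) := by
  rw [← Real.rpow_natCast (x ^ c) 2, ← Real.rpow_mul hx]
  norm_num

lemma psi_hasDerivAt {b : ℝ} (hb : 1 ≤ b) (t : ℝ) :
    HasDerivAt (fun s : ℝ => |s| ^ (b - 1) * s) (b * |t| ^ (b - 1)) t := by
  rcases lt_trichotomy t 0 with ht | rfl | ht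
  · have h2 : HasDerivAt (fun s : ℝ => (-s) ^ b) ((b * (-t) ^ (b - 1)) * (-1)) t :=
      (Real.hasDerivAt_rpow_const (p := b) (Or.inl (neg_ne_zero.2 ht.ne))).comp t (hasDerivAt_neg t)
    have h1 : HasDerivAt (fun s : ℝ => -((-s) ^ b)) (b * (-t) ^ (b - 1)) t := by
      have h3 := h2.neg
      simp only [mul_neg, mul_one, neg_neg] at h3
      exact h3
    have heq : (fun s : ℝ => -((-s) ^ b)) =ᶠ[nhds t] fun s => |s| ^ (b - 1) * s := by
      filter_upwards [Iio_mem_nhds ht] with s hs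
      have hs' : (0:ℝ) < -s := by simpa using hs
      rw [abs_of_neg hs, show b = (b-1) + 1 by ring, Real.rpow_add hs']
      rw [Real.rpow_one]; ring
    have := h1.congr_of_eventuallyEq heq.symm
    rwa [abs_of_neg ht]
  · rcases eq_or_lt_of_le hb with rfl | hb1
    · have hfe : (fun s : ℝ => |s| ^ ((1:ℝ) - 1) * s) = fun s => s := by
        funext s; norm_num
      rw [hfe]
      rw [show (1:ℝ) * |(0:ℝ)| ^ ((1:ℝ) - 1) = 1 by norm_num]
      exact hasDerivAt_id' (0:ℝ)
    · have hval : b * |(0:ℝ)| ^ (b - 1) = 0 := by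
        rw [abs_zero, Real.zero_rpow (by linarith)]; ring
      rw [hval]
      rw [hasDerivAt_iff_tendsto_slope]
      have hcont : Filter.Tendsto (fun s : ℝ => |s| ^ (b - 1)) (nhds 0) (nhds 0) := by
        have := (contAbsRpow (by linarith : (0:ℝ) ≤ b - 1)).tendsto 0
        simpa [Real.zero_rpow (show b - 1 ≠ 0 by linarith)] using this
      refine (hcont.mono_left nhdsWithin_le_nhds).congr' ?_
      filter_upwards [self_mem_nhdsWithin] with s hs
      have hs' : s ≠ 0 := hs
      simp only [slope, vsub_eq_sub, smul_eq_mul, sub_zero, abs_zero,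
        Real.zero_rpow (show b - 1 ≠ 0 by linarith), mul_zero]
      rw [mul_comm, mul_assoc, mul_inv_cancel₀ hs', mul_one]
  · have h1 : HasDerivAt (fun s : ℝ => s ^ b) (b * t ^ (b - 1)) t :=
      Real.hasDerivAt_rpow_const (Or.inl ht.ne')
    have heq : (fun s : ℝ => s ^ b) =ᶠ[nhds t] fun s => |s| ^ (b - 1) * s := by
      filter_upwards [Ioi_mem_nhds ht] with s hs
      have hs' : (0:ℝ) < s := hs
      rw [abs_of_pos hs', show b = (b-1) + 1 by ring, Real.rpow_add hs']
      simp
    have := h1.congr_of_eventuallyEq heq.symm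
    rwa [abs_of_pos ht]

lemma euclid_decomp {n : ℕ} (x : EuclideanSpace ℝ (Fin n)) :
    x = ∑ i : Fin n, x i • EuclideanSpace.single i (1:ℝ) := by
  ext j
  rw [show (∑ i : Fin n, x i • EuclideanSpace.single i (1:ℝ)) j
      = ∑ i : Fin n, (x i • EuclideanSpace.single i (1:ℝ)) j from by
    rw [WithLp.ofLp_sum]; exact Finset.sum_apply j _ _]
  simp [EuclideanSpace.single_apply]

lemma opnorm_sq_le {n : ℕ} (L : EuclideanSpace ℝ (Fin n) →L[ℝ] ℝ) :
    ‖L‖ ^ 2 ≤ ∑ i : Fin n, (L (EuclideanSpace.single i 1)) ^ 2 := by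
  set M : ℝ := Real.sqrt (∑ i : Fin n, (L (EuclideanSpace.single i 1)) ^ 2) with hM
  have hMnn : 0 ≤ M := Real.sqrt_nonneg _
  have hSnn : 0 ≤ ∑ i : Fin n, (L (EuclideanSpace.single i 1)) ^ 2 :=
    Finset.sum_nonneg fun i _ => sq_nonneg _
  have hb : ‖L‖ ≤ M := by
    refine L.opNorm_le_bound hMnn fun x => ?_
    have hLx : L x = ∑ i : Fin n, x i * L (EuclideanSpace.single i 1) := by
      conv_lhs => rw [euclid_decomp x]
      rw [map_sum]
      simp [smul_eq_mul]
    have hx2 : ‖x‖ = Real.sqrt (∑ i : Fin n, (x i) ^ 2) := by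
      rw [EuclideanSpace.norm_eq]
      congr 1
      refine Finset.sum_congr rfl fun i _ => by rw [Real.norm_eq_abs, sq_abs]
    have h1 : ‖L x‖ ^ 2 ≤ (∑ i : Fin n, (x i) ^ 2) * ∑ i : Fin n, (L (EuclideanSpace.single i 1)) ^ 2 := by
      rw [Real.norm_eq_abs, sq_abs, hLx]
      exact Finset.sum_mul_sq_le_sq_mul_sq _ _ _
    have h2 := Real.sqrt_le_sqrt h1
    rw [Real.sqrt_sq (norm_nonneg _), Real.sqrt_mul (Finset.sum_nonneg fun i _ => sq_nonneg _)] at h2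
    rw [hx2, hM]
    linarith [h2]
  calc ‖L‖ ^ 2 ≤ M ^ 2 := pow_le_pow_left₀ (norm_nonneg _) hb 2
    _ = _ := Real.sq_sqrt hSnn

lemma poincare {n : ℕ} (hn : 1 ≤ n) {v : EuclideanSpace ℝ (Fin n) → ℝ} {R : ℝ} (hR : 0 < R)
    (hdv : Differentiable ℝ v) (hcv : Continuous (fderiv ℝ v))
    (hsupp : ∀ x, R ≤ ‖x‖ → v x = 0) :
    ∫⁻ x, (‖v x‖₊ : ℝ≥0∞) ^ (2:ℝ)
      ≤ ENNReal.ofReal ((2*R+1)^2) * ∫⁻ x, (‖fderiv ℝ v x‖₊ : ℝ≥0∞) ^ (2:ℝ) := by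
  set T : ℝ := 2*R+1 with hT
  have hTpos : (0:ℝ) < T := by linarith
  set e : EuclideanSpace ℝ (Fin n) := EuclideanSpace.single (⟨0, hn⟩ : Fin n) (1:ℝ) with he
  have he1 : ‖e‖ = 1 := by rw [he, EuclideanSpace.norm_single]; norm_num
  set G : EuclideanSpace ℝ (Fin n) → ℝ≥0∞ := fun y => (‖fderiv ℝ v y‖₊ : ℝ≥0∞) with hG
  have hGc : Continuous G := ENNReal.continuous_coe.comp (continuous_nnnorm.comp hcv)
  -- pointwise estimate
  have key : ∀ x, (‖v x‖₊ : ℝ≥0∞) ^ (2:ℝ)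
      ≤ ENNReal.ofReal T * ∫⁻ t in Set.Ioc (0:ℝ) T, G (x + t • e) ^ (2:ℝ) := by
    intro x
    by_cases hx : v x = 0
    · rw [hx]
      simp [ENNReal.zero_rpow_of_pos (by norm_num : (0:ℝ) < 2)]
    have hxR : ‖x‖ < R := lt_of_not_ge fun h => hx (hsupp x h)
    have hline : Continuous fun t : ℝ => x + t • e :=
      (continuous_const.add (continuous_id.smul continuous_const))
    have hF : ∀ t : ℝ, HasDerivAt (fun t : ℝ => v (x + t • e)) (fderiv ℝ v (x + t • e) e) t := by
      intro t
      have h1 : HasDerivAt (fun t : ℝ => x + t • e) e t := by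
        simpa using ((hasDerivAt_id t).smul_const e).const_add x
      exact (hdv (x + t • e)).hasFDerivAt.comp_hasDerivAt t h1
    have hiInt : IntervalIntegrable (fun t : ℝ => fderiv ℝ v (x + t • e) e) volume 0 T := by
      refine Continuous.intervalIntegrable ?_ _ _
      exact (ContinuousLinearMap.apply ℝ ℝ e).continuous.comp (hcv.comp hline)
    have hzero : v (x + T • e) = 0 := by
      refine hsupp _ ?_
      have h1 : ‖T • e‖ ≤ ‖x + T • e‖ + ‖x‖ := by
        calc ‖T • e‖ = ‖(x + T • e) + (-x)‖ := by congr 1; abel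
          _ ≤ ‖x + T • e‖ + ‖-x‖ := norm_add_le _ _
          _ = ‖x + T • e‖ + ‖x‖ := by rw [norm_neg]
      rw [norm_smul, he1, Real.norm_eq_abs, abs_of_pos hTpos, mul_one] at h1
      linarith
    have hint : ∫ t in (0:ℝ)..T, fderiv ℝ v (x + t • e) e = - v x := by
      rw [intervalIntegral.integral_eq_sub_of_hasDerivAt (fun t _ => hF t) hiInt, hzero]
      simp
    have h1 : (‖v x‖₊ : ℝ≥0∞) ≤ ∫⁻ t in Set.Ioc (0:ℝ) T, G (x + t • e) := by
      have hvx : v x = - ∫ t in (0:ℝ)..T, fderiv ℝ v (x + t • e) e := by rw [hint]; ring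
      rw [hvx, nnnorm_neg, intervalIntegral.integral_of_le hTpos.le]
      refine le_trans (enorm_integral_le_lintegral_enorm _) (lintegral_mono fun t => ?_)
      have h2 := (fderiv ℝ v (x + t • e)).le_opNorm e
      rw [he1, mul_one] at h2
      exact ENNReal.coe_le_coe.2 (by simpa [← NNReal.coe_le_coe] using h2)
    have h2 : (∫⁻ t in Set.Ioc (0:ℝ) T, G (x + t • e))
        ≤ (∫⁻ t in Set.Ioc (0:ℝ) T, G (x + t • e) ^ (2:ℝ)) ^ (1/(2:ℝ))
          * (ENNReal.ofReal T) ^ (1/(2:ℝ)) := by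
      have hconj : (2:ℝ).HolderConjugate 2 := Real.HolderConjugate.two_two
      have hmeas : AEMeasurable (fun t : ℝ => G (x + t • e))
          (volume.restrict (Set.Ioc (0:ℝ) T)) := (hGc.comp hline).aemeasurable
      have := ENNReal.lintegral_mul_le_Lp_mul_Lq (volume.restrict (Set.Ioc (0:ℝ) T)) hconj
        hmeas aemeasurable_const (g := fun _ => 1)
      simpa [Real.volume_Ioc, hTpos.le] using this
    calc (‖v x‖₊ : ℝ≥0∞) ^ (2:ℝ)
        ≤ ((∫⁻ t in Set.Ioc (0:ℝ) T, G (x + t • e) ^ (2:ℝ)) ^ (1/(2:ℝ))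
            * (ENNReal.ofReal T) ^ (1/(2:ℝ))) ^ (2:ℝ) := by
          exact ENNReal.rpow_le_rpow (h1.trans h2) (by norm_num)
      _ = ENNReal.ofReal T * ∫⁻ t in Set.Ioc (0:ℝ) T, G (x + t • e) ^ (2:ℝ) := by
          rw [ENNReal.mul_rpow_of_nonneg _ _ (by norm_num : (0:ℝ) ≤ 2),
            ← ENNReal.rpow_mul, ← ENNReal.rpow_mul]
          norm_num [mul_comm]
  -- integrate
  have hprodmeas : AEMeasurable (Function.uncurry fun x (t : ℝ) => G (x + t • e) ^ (2:ℝ))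
      ((volume : Measure (EuclideanSpace ℝ (Fin n))).prod
        (volume.restrict (Set.Ioc (0:ℝ) T))) := by
    refine Continuous.aemeasurable ?_
    refine (ENNReal.continuous_rpow_const.comp (hGc.comp ?_))
    exact continuous_fst.add (continuous_snd.smul continuous_const)
  calc ∫⁻ x, (‖v x‖₊ : ℝ≥0∞) ^ (2:ℝ)
      ≤ ∫⁻ x, ENNReal.ofReal T * ∫⁻ t in Set.Ioc (0:ℝ) T, G (x + t • e) ^ (2:ℝ) :=
        lintegral_mono key
    _ = ENNReal.ofReal T * ∫⁻ x, ∫⁻ t in Set.Ioc (0:ℝ) T, G (x + t • e) ^ (2:ℝ) :=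
        lintegral_const_mul' _ _ ENNReal.ofReal_ne_top
    _ = ENNReal.ofReal T * ∫⁻ t in Set.Ioc (0:ℝ) T, ∫⁻ x, G (x + t • e) ^ (2:ℝ) := by
        rw [lintegral_lintegral_swap hprodmeas]
    _ = ENNReal.ofReal T * ∫⁻ t in Set.Ioc (0:ℝ) T, ∫⁻ x, G x ^ (2:ℝ) := by
        congr 1
        refine lintegral_congr fun t => ?_
        exact lintegral_add_right_eq_self (fun y => G y ^ (2:ℝ)) (t • e)
    _ = ENNReal.ofReal ((2*R+1)^2) * ∫⁻ x, G x ^ (2:ℝ) := by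
        rw [setLIntegral_const, Real.volume_Ioc]
        rw [show T - 0 = T by ring, sq, ENNReal.ofReal_mul hTpos.le]
        ring


/-- The Laplacian of a function on `ℝⁿ`, as the sum of the pure second derivatives. -/
noncomputable def lapl {n : ℕ} (u : EuclideanSpace ℝ (Fin n) → ℝ)
    (x : EuclideanSpace ℝ (Fin n)) : ℝ :=
  ∑ i : Fin n,
    fderiv ℝ (fun y => fderiv ℝ u y (EuclideanSpace.single i 1)) x (EuclideanSpace.single i 1)

/-- The structural inequality `‖u‖_{L^ℓ}^{ℓ-1+γ} ≤ C ∫ |u|^{ℓ-2} u (-Δu)` for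
smooth functions compactly supported in a bounded open set `Ω`. -/
theorem structural_inequality_laplacian (n : ℕ) (hn : 1 ≤ n)
    (Ω : Set (EuclideanSpace ℝ (Fin n))) (hΩo : IsOpen Ω) (hΩb : Bornology.IsBounded Ω)
    (ℓ : ℝ) (hℓ : 2 ≤ ℓ) :
    ∃ γ : ℝ, 0 < γ ∧ ∃ C : ℝ, 0 < C ∧
      ∀ u : EuclideanSpace ℝ (Fin n) → ℝ, ContDiff ℝ (⊤ : ℕ∞) u → HasCompactSupport u →
        tsupport u ⊆ Ω →
        ((∫ x in Ω, |u x| ^ ℓ) ^ (1 / ℓ)) ^ (ℓ - 1 + γ)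
          ≤ C * ∫ x in Ω, |u x| ^ (ℓ - 2) * u x * (-(lapl u x)) := by
  obtain ⟨R₀, hR₀⟩ := hΩb.subset_ball 0
  set R : ℝ := max R₀ 1 with hRdef
  have hR : (0:ℝ) < R := lt_of_lt_of_le one_pos (le_max_right _ _)
  have hΩR : Ω ⊆ Metric.ball 0 R := hR₀.trans (Metric.ball_subset_ball (le_max_left _ _))
  set T : ℝ := 2*R+1 with hTdef
  have hT : (0:ℝ) < T := by linarith
  set a : ℝ := ℓ/2 with hadef
  have ha : (1:ℝ) ≤ a := by rw [hadef]; linarith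
  have ha1 : (0:ℝ) ≤ a - 1 := by linarith
  have hl1 : (0:ℝ) < ℓ - 1 := by linarith
  have hl2 : (1:ℝ) ≤ ℓ - 1 := by linarith
  have hl0 : (0:ℝ) < ℓ := by linarith
  have hℓne : ℓ ≠ 0 := ne_of_gt hl0
  refine ⟨1, one_pos, (T^2 * a^2)/(ℓ-1), div_pos (mul_pos (pow_pos hT 2) (pow_pos (by linarith : (0:ℝ) < a) 2)) hl1, ?_⟩
  intro u hu hcs hsub
  have hu1 : ContDiff ℝ 1 u := hu.of_le (by simp)
  have hud : Differentiable ℝ u := hu1.differentiable one_ne_zero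
  have hcontu : Continuous u := hud.continuous
  have hufc : Continuous (fderiv ℝ u) := hu.continuous_fderiv (by simp)
  have hu0 : ∀ x ∉ Ω, u x = 0 := fun x hx =>
    image_eq_zero_of_notMem_tsupport fun h => hx (hsub h)
  set e : Fin n → EuclideanSpace ℝ (Fin n) := fun i => EuclideanSpace.single i 1 with hedef
  set w : Fin n → EuclideanSpace ℝ (Fin n) → ℝ := fun i y => fderiv ℝ u y (e i) with hwdef
  set v : EuclideanSpace ℝ (Fin n) → ℝ := fun x => |u x| ^ (a-1) * u x with hvdef
  set g : EuclideanSpace ℝ (Fin n) → ℝ := fun x => |u x| ^ (ℓ-2) * u x with hgdef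
  set Q : EuclideanSpace ℝ (Fin n) → ℝ := fun x => ∑ i : Fin n, (w i x)^2 with hQdef
  -- integrability helper
  have mkInt : ∀ f : EuclideanSpace ℝ (Fin n) → ℝ, Continuous f →
      Function.support f ⊆ tsupport u → Integrable f := fun f hf hsup =>
    hf.integrable_of_hasCompactSupport
      (HasCompactSupport.of_support_subset_isCompact hcs hsup)
  -- derivatives
  have hva : ∀ x, HasFDerivAt v ((a * |u x| ^ (a-1)) • fderiv ℝ u x) x := fun x =>
    (psi_hasDerivAt ha (u x)).comp_hasFDerivAt x (hud x).hasFDerivAt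
  have hvd : Differentiable ℝ v := fun x => (hva x).differentiableAt
  have hvf : fderiv ℝ v = fun x => (a * |u x| ^ (a-1)) • fderiv ℝ u x :=
    funext fun x => (hva x).fderiv
  have hvc : Continuous v := ((contAbsRpow ha1).comp hcontu).mul hcontu
  have hvfc : Continuous (fderiv ℝ v) := by
    rw [hvf]
    exact (continuous_const.mul ((contAbsRpow ha1).comp hcontu)).smul hufc
  have hga : ∀ x, HasFDerivAt g (((ℓ-1) * |u x| ^ (ℓ-2)) • fderiv ℝ u x) x := by
    intro x
    have h := (psi_hasDerivAt hl2 (u x)).comp_hasFDerivAt x (hud x).hasFDerivAt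
    rw [show ℓ - 1 - 1 = ℓ - 2 by ring] at h
    exact h
  have hgd : Differentiable ℝ g := fun x => (hga x).differentiableAt
  have hgf : fderiv ℝ g = fun x => ((ℓ-1) * |u x| ^ (ℓ-2)) • fderiv ℝ u x :=
    funext fun x => (hga x).fderiv
  have hl2' : (0:ℝ) ≤ ℓ - 2 := by linarith
  have hgc : Continuous g := ((contAbsRpow hl2').comp hcontu).mul hcontu
  -- w facts
  have cdf2 : ContDiff ℝ 2 (fderiv ℝ u) := hu.fderiv_right (WithTop.coe_le_coe.2 le_top)
  have cdw : ∀ i, ContDiff ℝ 2 (w i) := fun i => cdf2.clm_apply contDiff_const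
  have hwd : ∀ i, Differentiable ℝ (w i) := fun i => (cdw i).differentiable two_ne_zero
  have hwc : ∀ i, Continuous (w i) := fun i => (hwd i).continuous
  have hwfc : ∀ i, Continuous fun x => fderiv ℝ (w i) x (e i) := fun i =>
    (((cdw i).fderiv_right (by norm_num : (1:WithTop ℕ∞) + 1 ≤ 2)).clm_apply contDiff_const).continuous
  -- supports
  have hsupw : ∀ i, Function.support (w i) ⊆ tsupport u := by
    intro i x hx
    by_contra hxt
    have h0 : fderiv ℝ u x = 0 :=
      Function.notMem_support.1 fun hc => hxt (support_fderiv_subset ℝ hc)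
    exact hx (by simp [hwdef, h0])
  have hsupu : Function.support u ⊆ tsupport u := subset_closure
  have hsupg : Function.support g ⊆ tsupport u := by
    intro x hx
    refine hsupu ?_
    intro h0
    exact hx (by simp [hgdef, h0])
  have hsupv : Function.support v ⊆ tsupport u := by
    intro x hx
    refine hsupu ?_
    intro h0
    exact hx (by simp [hvdef, h0])
  -- Poincaré for v
  have hvz : ∀ x, R ≤ ‖x‖ → v x = 0 := by
    intro x hxR
    have hxΩ : x ∉ Ω := fun hmem => by
      have := hΩR hmem
      rw [Metric.mem_ball, dist_zero_right] at this
      linarith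
    simp [hvdef, hu0 x hxΩ, mul_zero]
  have hpoin := poincare hn hR hvd hvfc hvz
  -- IBP
  have hibp : ∀ i : Fin n, ∫ x, g x * fderiv ℝ (w i) x (e i)
      = - ∫ x, (ℓ-1) * (|u x| ^ (ℓ-2) * (w i x)^2) := by
    intro i
    have hfg'eq : (fun x => fderiv ℝ g x (e i) * w i x)
        = fun x => (ℓ-1) * (|u x| ^ (ℓ-2) * (w i x)^2) := by
      funext x
      rw [hgf]
      simp only [ContinuousLinearMap.coe_smul', Pi.smul_apply, smul_eq_mul]
      ring
    have h1 : Integrable fun x => fderiv ℝ g x (e i) * w i x := by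
      rw [hfg'eq]
      refine mkInt _ (continuous_const.mul (((contAbsRpow hl2').comp hcontu).mul
        ((hwc i).pow 2))) ?_
      intro x hx
      refine hsupw i ?_
      intro h0
      exact hx (by simp [h0])
    have h2 : Integrable fun x => g x * fderiv ℝ (w i) x (e i) := by
      refine mkInt _ (hgc.mul (hwfc i)) ?_
      intro x hx
      refine hsupg ?_
      intro h0
      exact hx (by simp [h0])
    have h3 : Integrable fun x => g x * w i x := by
      refine mkInt _ (hgc.mul (hwc i)) ?_
      intro x hx
      refine hsupg ?_
      intro h0
      exact hx (by simp [h0])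
    have h := integral_mul_fderiv_eq_neg_fderiv_mul_of_integrable h1 h2 h3 (fun x _ => hgd x) (fun x _ => hwd i x)
    rw [h, hfg'eq]
  -- summation: key equality
  set I : ℝ := ∫ x, |u x| ^ (ℓ-2) * Q x with hIdef
  have hIint : Integrable fun x => |u x| ^ (ℓ-2) * Q x := by
    refine mkInt _ (((contAbsRpow hl2').comp hcontu).mul ?_) ?_
    · exact continuous_finset_sum _ fun i _ => (hwc i).pow 2
    · intro x hx
      by_contra hxt
      have h0 : fderiv ℝ u x = 0 :=
        Function.notMem_support.1 fun hc => hxt (support_fderiv_subset ℝ hc)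
      refine hx ?_
      simp [hQdef, hwdef, h0]
  have hI0 : 0 ≤ I := integral_nonneg fun x =>
    mul_nonneg (Real.rpow_nonneg (abs_nonneg _) _)
      (Finset.sum_nonneg fun i _ => sq_nonneg _)
  have hBeq : ∫ x, g x * (-(lapl u x)) = (ℓ-1) * I := by
    have hlapl : ∀ x, lapl u x = ∑ i : Fin n, fderiv ℝ (w i) x (e i) := fun x => rfl
    have step1 : (fun x => g x * (-(lapl u x)))
        = fun x => ∑ i : Fin n, -(g x * fderiv ℝ (w i) x (e i)) := by
      funext x
      rw [hlapl x, mul_neg, Finset.mul_sum, ← Finset.sum_neg_distrib]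
    rw [step1]
    rw [integral_finset_sum _ (fun i _ => ?_)]
    swap
    · refine Integrable.neg ?_
      refine mkInt _ (hgc.mul (hwfc i)) ?_
      intro x hx
      refine hsupg ?_
      intro h0
      exact hx (by simp [h0])
    have step2 : ∀ i : Fin n, ∫ x, -(g x * fderiv ℝ (w i) x (e i))
        = ∫ x, (ℓ-1) * (|u x| ^ (ℓ-2) * (w i x)^2) := by
      intro i
      rw [integral_neg, hibp i, neg_neg]
    rw [Finset.sum_congr rfl fun i _ => step2 i]
    rw [← integral_finset_sum _ (fun i _ => ?_)]
    swap
    · refine Integrable.const_mul ?_ _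
      refine mkInt _ (((contAbsRpow hl2').comp hcontu).mul ((hwc i).pow 2)) ?_
      intro x hx
      refine hsupw i ?_
      intro h0
      exact hx (by simp [h0])
    rw [hIdef, ← integral_const_mul]
    refine integral_congr_ae (Filter.Eventually.of_forall fun x => ?_)
    simp only [hQdef, Finset.mul_sum]
    try exact Finset.sum_congr rfl fun i _ => by ring
  -- pointwise identities
  have hpt2 : ∀ r : ℝ, ENNReal.ofReal (r^2) = (‖r‖₊ : ℝ≥0∞)^(2:ℝ) := by
    intro r
    rw [show ((‖r‖₊ : ℝ≥0∞)) = ENNReal.ofReal |r| from Real.enorm_eq_ofReal_abs r, ENNReal.ofReal_rpow_of_nonneg (abs_nonneg r) (by norm_num)]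
    rw [show (2:ℝ) = ((2:ℕ):ℝ) from by norm_num, Real.rpow_natCast, sq_abs]
  have hpt1 : ∀ x, |u x| ^ ℓ = (v x)^2 := by
    intro x
    rw [hvdef]
    rcases eq_or_ne (u x) 0 with h0 | h0
    · simp [h0, Real.zero_rpow hℓne]
    · have habs : (0:ℝ) < |u x| := abs_pos.2 h0
      rw [mul_pow, rpow_sq_eq (abs_nonneg (u x)) (a-1), ← sq_abs (u x),
        ← Real.rpow_natCast |u x| 2, ← Real.rpow_add habs]
      congr 1
      push_cast
      rw [hadef]
      ring
  -- conversions
  set A : ℝ := ∫ x, |u x| ^ ℓ with hAdef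
  have hAint : Integrable fun x => (v x)^2 := by
    refine mkInt _ (hvc.pow 2) ?_
    intro x hx
    refine hsupv ?_
    intro h0
    exact hx (by simp [h0])
  have hAconv : ENNReal.ofReal A = ∫⁻ x, (‖v x‖₊ : ℝ≥0∞)^(2:ℝ) := by
    rw [hAdef, show (∫ x, |u x| ^ ℓ) = ∫ x, (v x)^2 from by
      refine integral_congr_ae (Filter.Eventually.of_forall fun x => hpt1 x)]
    rw [ofReal_integral_eq_lintegral_ofReal hAint
      (Filter.Eventually.of_forall fun x => sq_nonneg _)]
    exact lintegral_congr fun x => hpt2 (v x)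
  have hfvb : ∀ x, (‖fderiv ℝ v x‖₊ : ℝ≥0∞)^(2:ℝ)
      ≤ ENNReal.ofReal (a^2 * (|u x| ^ (ℓ-2) * Q x)) := by
    intro x
    rw [show ((‖fderiv ℝ v x‖₊ : ℝ≥0∞)) = ENNReal.ofReal ‖fderiv ℝ v x‖ from
      (ofReal_norm_eq_enorm _).symm]
    rw [ENNReal.ofReal_rpow_of_nonneg (norm_nonneg _) (by norm_num),
      show (2:ℝ) = ((2:ℕ):ℝ) from by norm_num, Real.rpow_natCast]
    refine ENNReal.ofReal_le_ofReal ?_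
    have hnv : ‖fderiv ℝ v x‖ = (a * |u x| ^ (a-1)) * ‖fderiv ℝ u x‖ := by
      rw [hvf]
      simp only [norm_smul, Real.norm_eq_abs]
      rw [abs_of_nonneg (mul_nonneg (by linarith) (Real.rpow_nonneg (abs_nonneg _) _))]
    have hop : ‖fderiv ℝ u x‖^2 ≤ Q x := by
      rw [hQdef]
      exact opnorm_sq_le (fderiv ℝ u x)
    have hsq : (|u x| ^ (a-1))^2 = |u x| ^ (ℓ-2) := by
      rw [rpow_sq_eq (abs_nonneg _) (a-1)]
      congr 1
      rw [hadef]; ring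
    calc ‖fderiv ℝ v x‖^2 = a^2 * (|u x| ^ (ℓ-2) * ‖fderiv ℝ u x‖^2) := by
          rw [hnv, mul_pow, mul_pow, hsq]; ring
      _ ≤ a^2 * (|u x| ^ (ℓ-2) * Q x) := by
          have h1 : 0 ≤ |u x| ^ (ℓ-2) := Real.rpow_nonneg (abs_nonneg _) _
          exact mul_le_mul_of_nonneg_left (mul_le_mul_of_nonneg_left hop h1) (sq_nonneg a)
  have hch : ∫⁻ x, (‖fderiv ℝ v x‖₊ : ℝ≥0∞)^(2:ℝ) ≤ ENNReal.ofReal (a^2 * I) := by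
    refine le_trans (lintegral_mono hfvb) ?_
    have hI2 : Integrable fun x => a^2 * (|u x| ^ (ℓ-2) * Q x) := hIint.const_mul _
    rw [← ofReal_integral_eq_lintegral_ofReal hI2 (Filter.Eventually.of_forall fun x =>
      mul_nonneg (sq_nonneg _) (mul_nonneg (Real.rpow_nonneg (abs_nonneg _) _)
        (Finset.sum_nonneg fun i _ => sq_nonneg _)))]
    rw [integral_const_mul]
  -- main estimate
  have hmain : A ≤ T^2 * (a^2 * I) := by
    have h1 : ENNReal.ofReal A ≤ ENNReal.ofReal (T^2 * (a^2 * I)) := by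
      rw [hAconv]
      refine le_trans hpoin ?_
      rw [ENNReal.ofReal_mul (sq_nonneg T)]
      rw [show (2*R+1)^2 = T^2 from by rw [hTdef]]
      exact mul_le_mul_right hch _
    exact (ENNReal.ofReal_le_ofReal_iff (mul_nonneg (sq_nonneg T) (mul_nonneg (sq_nonneg a) hI0))).1 h1
  -- final goal manipulation
  have hint1 : ∫ x in Ω, |u x| ^ ℓ = A := by
    rw [hAdef]
    refine setIntegral_eq_integral_of_forall_compl_eq_zero fun x hx => ?_
    rw [hu0 x hx, abs_zero, Real.zero_rpow hℓne]
  have hint2 : ∫ x in Ω, |u x| ^ (ℓ-2) * u x * (-(lapl u x)) = ∫ x, g x * (-(lapl u x)) := by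
    refine setIntegral_eq_integral_of_forall_compl_eq_zero fun x hx => ?_
    rw [hu0 x hx]
    ring
  rw [hint1, hint2, hBeq]
  have hA0 : 0 ≤ A := by
    rw [hAdef]
    exact integral_nonneg fun x => Real.rpow_nonneg (abs_nonneg _) _
  rw [show ℓ - 1 + 1 = ℓ by ring, ← Real.rpow_mul hA0, one_div, inv_mul_cancel₀ hℓne,
    Real.rpow_one]
  have hfinal : (T^2 * a^2)/(ℓ-1) * ((ℓ-1) * I) = T^2 * (a^2 * I) := by
    field_simp
  rw [hfinal]
  exact hmain
end

section
/- Let p > 2 and C > 0, and let f : [0,∞) → [0,∞) be differentiable with f'(t) + C f(t)^{p-1} ≤ 0 for all t ≥ 0. Then f(t) ≤ ((p-2)·C·t)^{-1/(p-2)} for all t > 0; in particular the decay rate is independent of f(0). -/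
/-!
Along a positive solution of `f' ≤ -C f^{p-1}` the quantity `f^{2-p}` grows at rate at least
`(p-2) C`, since `(f^{2-p})' = (2-p) f' f^{1-p}`. Integrating from `0` and discarding the
positive term `f(0)^{2-p}` gives `f(t)^{2-p} ≥ (p-2) C t`, a bound that no longer sees `f(0)`;
inverting the power yields the claim. Positivity on `[0, t]` comes from `f` being nonincreasing.
-/

open Real Set

theorem antitoneOn_of_differentiableAt_of_deriv_nonpos {D : Set ℝ} (hD : Convex ℝ D)
    {f : ℝ → ℝ} (hf : ∀ x ∈ D, DifferentiableAt ℝ f x) (hf' : ∀ x ∈ D, deriv f x ≤ 0) :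
    AntitoneOn f D :=
  antitoneOn_of_deriv_nonpos hD (fun x hx => (hf x hx).continuousAt.continuousWithinAt)
    (fun x hx => (hf x (interior_subset hx)).differentiableWithinAt)
    (fun x hx => hf' x (interior_subset hx))

section PowerDecay

variable {f : ℝ → ℝ} {p C : ℝ}

theorem hasDerivAt_rpow_two_sub {t : ℝ} (hft : 0 < f t) (hf : DifferentiableAt ℝ f t) :
    HasDerivAt (fun s => f s ^ (2 - p)) (deriv f t * (2 - p) * f t ^ (1 - p)) t := by
  convert hf.hasDerivAt.rpow_const (p := 2 - p) (Or.inl hft.ne') using 3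
  ring

theorem le_deriv_rpow_two_sub (hp : 2 ≤ p) {t : ℝ} (hft : 0 < f t)
    (hf : DifferentiableAt ℝ f t) (hineq : deriv f t + C * f t ^ (p - 1) ≤ 0) :
    (p - 2) * C ≤ deriv (fun s => f s ^ (2 - p)) t := by
  rw [(hasDerivAt_rpow_two_sub hft hf).deriv]
  have hcancel : f t ^ (p - 1) * f t ^ (1 - p) = 1 := by
    rw [← rpow_add hft, show p - 1 + (1 - p) = 0 by ring, rpow_zero]
  have hscaled : (p - 2) * (C * f t ^ (p - 1)) * f t ^ (1 - p)
      ≤ (p - 2) * (-deriv f t) * f t ^ (1 - p) := by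
    gcongr
    linarith
  calc (p - 2) * C = (p - 2) * (C * f t ^ (p - 1)) * f t ^ (1 - p) := by
        rw [mul_assoc (p - 2), mul_assoc C, hcancel, mul_one]
    _ ≤ (p - 2) * (-deriv f t) * f t ^ (1 - p) := hscaled
    _ = deriv f t * (2 - p) * f t ^ (1 - p) := by ring

theorem mul_sub_le_rpow_two_sub_sub (hp : 2 ≤ p) {a b : ℝ} (hab : a ≤ b)
    (hpos : ∀ s ∈ Icc a b, 0 < f s) (hdiff : ∀ s ∈ Icc a b, DifferentiableAt ℝ f s)
    (hineq : ∀ s ∈ Icc a b, deriv f s + C * f s ^ (p - 1) ≤ 0) :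
    (p - 2) * C * (b - a) ≤ f b ^ (2 - p) - f a ^ (2 - p) := by
  have hderiv : ∀ s ∈ Icc a b, HasDerivAt (fun s => f s ^ (2 - p))
      (deriv f s * (2 - p) * f s ^ (1 - p)) s :=
    fun s hs => hasDerivAt_rpow_two_sub (hpos s hs) (hdiff s hs)
  refine (convex_Icc a b).mul_sub_le_image_sub_of_le_deriv
    (fun s hs => (hderiv s hs).continuousAt.continuousWithinAt)
    (fun s hs => (hderiv s (interior_subset hs)).differentiableAt.differentiableWithinAt)
    (fun s hs => ?_) a (left_mem_Icc.2 hab) b (right_mem_Icc.2 hab) hab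
  have hs' := interior_subset hs
  exact le_deriv_rpow_two_sub hp (hpos s hs') (hdiff s hs') (hineq s hs')

end PowerDecay

/-- Sharp, initial-datum-independent polynomial decay for `f' + C f^{p-1} ≤ 0`, `p > 2`. -/
theorem ode_sharp_decay (p C : ℝ) (hp : 2 < p) (hC : 0 < C)
    (f : ℝ → ℝ) (hpos : ∀ t ≥ (0:ℝ), 0 ≤ f t)
    (hdiff : ∀ t ≥ (0:ℝ), DifferentiableAt ℝ f t)
    (hineq : ∀ t ≥ (0:ℝ), deriv f t + C * f t ^ (p - 1) ≤ 0) :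
    ∀ t : ℝ, 0 < t → f t ≤ ((p - 2) * C * t) ^ (-(1 / (p - 2))) := by
  intro t ht
  rcases (hpos t ht.le).eq_or_lt with hft | hft
  · rw [← hft]
    positivity
  have hanti : AntitoneOn f (Ici 0) :=
    antitoneOn_of_differentiableAt_of_deriv_nonpos (convex_Ici 0) hdiff fun s hs => by
      linarith [hineq s hs, mul_nonneg hC.le (rpow_nonneg (hpos s hs) (p - 1))]
  have hfpos : ∀ s ∈ Icc 0 t, 0 < f s := fun s hs => hft.trans_le (hanti hs.1 ht.le hs.2)
  have hgrowth := mul_sub_le_rpow_two_sub_sub hp.le ht.le hfpos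
    (fun s hs => hdiff s hs.1) (fun s hs => hineq s hs.1)
  have hf0 : 0 < f 0 ^ (2 - p) := rpow_pos_of_pos (hfpos 0 (left_mem_Icc.2 ht.le)) _
  have hexp : -(1 / (p - 2)) = (2 - p)⁻¹ := by rw [one_div, ← inv_neg, neg_sub]
  rw [hexp, le_rpow_inv_iff_of_neg hft (by positivity) (by linarith)]
  linarith
end
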